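/- Let F : C → D be an exact functor between abelian categories with right adjoint G, and suppose the derived unit of adjunction η : id → RG ∘ F is an isomorphism on an object N of D^+(C). If F(N) admits an injective resolution of length ≤ k in D, then N admits an injective resolution of length ≤ k in C. In particular, injdim_C(N) ≤ injdim_D(F N). -/

import Mathlib

/-!
Since the left adjoint `F` preserves monomorphisms, `G` preserves injectives, so applying `G` to an
injective resolution `I` of `F N` gives a complex of injectives. Its cohomology computes
`RG(F N)`: in degree `0` it is `G(F N) ≅ N` (left exactness of `G`), and it vanishes above by
hypothesis. Hence `G(I)` is an injective resolution of `N`, and it is no longer than `I`.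
-/

open CategoryTheory

/-- `injDimLE M n` : `M` admits an injective resolution of length at most `n`
(i.e. the injective dimension of `M` is at most `n`). -/
def injDimLE {C : Type*} [Category C] [Abelian C] (M : C) (n : ℕ) : Prop :=
  ∃ I : InjectiveResolution M, ∀ i, n < i → Limits.IsZero (I.cocomplex.X i)

noncomputable section

namespace CategoryTheory.InjectiveResolution

open Limits

variable {C : Type*} [Category C] [Abelian C]

def ofIso {X Y : C} (e : X ≅ Y) (I : InjectiveResolution Y) : InjectiveResolution X where
  cocomplex := I.cocomplex
  ι := (CochainComplex.single₀ C).map e.hom ≫ I.ι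

def ofIsLimitKernelFork (J : CochainComplex C ℕ) [∀ n, Injective (J.X n)]
    {c : KernelFork (J.d 0 1)} (hc : IsLimit c) (hJ : ∀ n, J.ExactAt (n + 1)) :
    InjectiveResolution c.pt where
  cocomplex := J
  ι := (CochainComplex.fromSingle₀Equiv J c.pt).symm ⟨c.ι, c.condition⟩
  quasiIso := ⟨fun n => by
    cases n with
    | zero =>
      rw [CochainComplex.quasiIsoAt₀_iff, ShortComplex.quasiIso_iff_of_zeros]
      · rw [ShortComplex.exact_and_mono_f_iff_f_is_kernel]
        exact ⟨IsLimit.ofIsoLimit hc (Fork.ext (Iso.refl _)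
          ((Category.id_comp _).trans (CochainComplex.fromSingle₀Equiv_symm_apply_f_zero _ _)))⟩
      · rfl
      · rfl
      · exact J.shape 0 0 (by simp)
    | succ n =>
      rw [quasiIsoAt_iff_exactAt _ _ (CochainComplex.exactAt_succ_single_obj _ _)]
      exact hJ n⟩

variable {D : Type*} [Category D] [Abelian D] [HasInjectiveResolutions D]

def mapOfIsZeroRightDerived (G : D ⥤ C) [G.Additive] [PreservesFiniteLimits G]
    [G.PreservesInjectiveObjects] {Y : D} (I : InjectiveResolution Y)
    (hG : ∀ n, IsZero ((G.rightDerived (n + 1)).obj Y)) : InjectiveResolution (G.obj Y) :=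
  haveI (n : ℕ) : Injective (((G.mapHomologicalComplex _).obj I.cocomplex).X n) :=
    G.injective_obj _
  ofIsLimitKernelFork ((G.mapHomologicalComplex _).obj I.cocomplex)
    (isLimitForkMapOfIsLimit' G I.ι_f_zero_comp_complex_d I.isLimitKernelFork)
    (fun n => by
      rw [HomologicalComplex.exactAt_iff_isZero_homology]
      exact (hG n).of_iso (I.isoRightDerivedObj G (n + 1)).symm)

end CategoryTheory.InjectiveResolution

end

open Limits in
theorem injDim_le_of_derived_unit_iso_general
    {C D : Type*} [Category C] [Category D] [Abelian C] [Abelian D]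
    [EnoughInjectives D]
    (F : C ⥤ D) [PreservesFiniteLimits F]
    (G : D ⥤ C) [G.Additive] (adj : F ⊣ G) (N : C)
    (h0 : IsIso (adj.unit.app N))
    (hi : ∀ i : ℕ, 0 < i → IsZero ((G.rightDerived i).obj (F.obj N)))
    (k : ℕ) (hk : injDimLE (F.obj N) k) :
    injDimLE N k := by
  obtain ⟨I, hI⟩ := hk
  have := adj.rightAdjoint_preservesLimits
  have := Functor.preservesInjectiveObjects_of_adjunction_of_preservesMonomorphisms adj
  have hG (n : ℕ) := hi (n + 1) n.succ_pos
  -- the cocomplex of the resolution built here is `G` applied to `I.cocomplex`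
  exact ⟨(I.mapOfIsZeroRightDerived G hG).ofIso (asIso (adj.unit.app N)), fun i hik =>
    G.map_isZero (hI i hik)⟩

open Limits in
/-- Let `F : C ⥤ D` be an exact functor between abelian categories with right
adjoint `G`, and let `N` be an object of `C` on which the derived unit of adjunction
`η : N → RG(F N)` is an isomorphism (equivalently, the unit `N → G(F N)` is an isomorphism and
`R^iG(F N) = 0` for `i > 0`). If `F N` admits an injective resolution of length `≤ k` in `D`,
then `N` admits an injective resolution of length `≤ k` in `C`; in particular
`injdim_C(N) ≤ injdim_D(F N)`. -/
theorem injDim_le_of_derived_unit_iso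
    {C D : Type*} [Category C] [Category D] [Abelian C] [Abelian D]
    [EnoughInjectives C] [EnoughInjectives D]
    (F : C ⥤ D) [F.Additive] [PreservesFiniteLimits F] [PreservesFiniteColimits F]
    (G : D ⥤ C) [G.Additive] (adj : F ⊣ G) (N : C)
    (h0 : IsIso (adj.unit.app N))
    (hi : ∀ i : ℕ, 0 < i → IsZero ((G.rightDerived i).obj (F.obj N)))
    (k : ℕ) (hk : injDimLE (F.obj N) k) :
    injDimLE N k :=
  injDim_le_of_derived_unit_iso_general F G adj N h0 hi k hk
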